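/- arXiv:1211.6715 — 15 statements merged into one kernel-verified Lean document; each statement's English description precedes it below -/
import Mathlib

section
/- Let K₂ be the complete simple graph on two vertices a, b (with one edge), let id : K₂ → K₂ be the identity and t : K₂ → K₂ the strict homomorphism swapping a and b (and fixing the edge). Then there is no simple loopless graph Q and strict homomorphism c : K₂ → Q with c ∘ id = c ∘ t. Consequently the parallel pair (id, t) has no coequalizer, so coequalizers do not exist in SiLlStGrphs. -/
/-- `K₂`, the complete simple graph on two vertices `0` and `1`. -/
def K2 : SimpleGraph (Fin 2) := ⊤

/-- The strict homomorphism `K₂ → K₂` swapping the two vertices. -/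
def twist : K2 →g K2 where
  toFun := Equiv.swap 0 1
  map_rel' := by
    intro a b hab
    simp only [K2, SimpleGraph.top_adj] at hab ⊢
    exact (Equiv.swap 0 1).injective.ne hab

/-- There is no simple loopless graph `Q` together with a strict homomorphism
`c : K₂ → Q` coequalizing the identity and the twist of `K₂`, i.e. with
`c ∘ id = c ∘ twist`.  Consequently the parallel pair `(id, twist)` has no
coequalizer in **SiLlStGrphs**. -/
theorem no_coequalizer_SiLlStGrphs :
    ¬ ∃ (W : Type) (Q : SimpleGraph W) (c : K2 →g Q),
        c.comp SimpleGraph.Hom.id = c.comp twist := by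
  rintro ⟨W, Q, c, h⟩
  have h0 : c 0 = c 1 := by
    have := congrFun (congrArg (fun f => f.toFun) h) 0
    simpa [twist, SimpleGraph.Hom.comp] using this
  have hadj : Q.Adj (c 0) (c 1) := c.map_adj (by simp [K2])
  rw [h0] at hadj
  exact Q.irrefl hadj
end

section
/- Let K₂ be the complete simple graph on two vertices. There is no simple loopless graph E together with a strict homomorphism ev : E × K₂ → K₂ such that for every simple loopless graph X and every strict homomorphism g : X × K₂ → K₂ there exists a unique strict homomorphism ḡ : X → E with ev ∘ (ḡ × id) = g, where ḡ × id : X × K₂ → E × K₂ is the strict homomorphism sending (x, a) to (ḡ x, a). That is, the exponential of K₂ by K₂ with evaluation does not exist in SiLlStGrphs. -/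
/-- The categorical product of simple loopless graphs: `(a,b)` is adjacent to
`(c,d)` iff `a ~ c` in `G` and `b ~ d` in `H`. -/
def catProd {V W : Type} (G : SimpleGraph V) (H : SimpleGraph W) :
    SimpleGraph (V × W) where
  Adj p q := G.Adj p.1 q.1 ∧ H.Adj p.2 q.2
  symm := ⟨fun _ _ h => ⟨h.1.symm, h.2.symm⟩⟩
  loopless := ⟨fun p h => G.irrefl h.1⟩

/-- Given a strict homomorphism `f : G → E`, the strict homomorphism
`f × id : G × K₂ → E × K₂` sending `(x, a)` to `(f x, a)`. -/
def prodWithIdK2 {V W : Type} {G : SimpleGraph V} {E : SimpleGraph W}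
    (f : G →g E) : catProd G K2 →g catProd E K2 where
  toFun p := (f p.1, p.2)
  map_rel' := fun h => ⟨f.map_rel h.1, h.2⟩

/-!
Call a vertex `e` of `E` an identity vertex if `ev (e, a) = a` for all `a`. Lifts of the
projection `X × K₂ → K₂` are exactly the maps `X → E` landing in identity vertices. Lifting it
from the one-vertex graph shows, by uniqueness, that there is at most one identity vertex; lifting
it from `K₂` sends the edge of `K₂` to an edge between identity vertices, hence to a loop.
-/

def catProd.snd {V W : Type} (G : SimpleGraph V) (H : SimpleGraph W) : catProd G H →g H :=
  ⟨Prod.snd, fun h => h.2⟩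

def IsExponentialK2 {VE : Type} (E : SimpleGraph VE) (ev : catProd E K2 →g K2) : Prop :=
  ∀ (VX : Type) (X : SimpleGraph VX) (g : catProd X K2 →g K2),
    ∃! gb : X →g E, ev.comp (prodWithIdK2 gb) = g

def SimpleGraph.Hom.constOfBot {V W : Type} (G : SimpleGraph W) (w : W) :
    (⊥ : SimpleGraph V) →g G :=
  ⟨fun _ => w, fun h => ((SimpleGraph.bot_adj _ _).mp h).elim⟩

section

variable {VE : Type} {E : SimpleGraph VE} {ev : catProd E K2 →g K2}

theorem ev_apply_of_comp_prodWithIdK2_eq_snd {VX : Type} {X : SimpleGraph VX} {f : X →g E}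
    (hf : ev.comp (prodWithIdK2 f) = catProd.snd X K2) (x : VX) (a : Fin 2) :
    ev (f x, a) = a :=
  DFunLike.congr_fun hf (x, a)

namespace IsExponentialK2

theorem eq_of_ev_eq (hexp : IsExponentialK2 E ev) {e e' : VE}
    (he : ∀ a, ev (e, a) = a) (he' : ∀ a, ev (e', a) = a) : e = e' := by
  have hlift : ∀ v, (∀ a, ev (v, a) = a) →
      ev.comp (prodWithIdK2 (.constOfBot E v)) = catProd.snd (⊥ : SimpleGraph Unit) K2 :=
    fun v hv => DFunLike.ext _ _ fun p => hv p.2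
  obtain ⟨_, _, huniq⟩ := hexp Unit ⊥ (catProd.snd ⊥ K2)
  have hconst := (huniq _ (hlift e he)).trans (huniq _ (hlift e' he')).symm
  exact DFunLike.congr_fun hconst ()

theorem exists_adj_ev_eq (hexp : IsExponentialK2 E ev) :
    ∃ e e', E.Adj e e' ∧ (∀ a, ev (e, a) = a) ∧ ∀ a, ev (e', a) = a := by
  obtain ⟨f, hf, -⟩ := hexp (Fin 2) K2 (catProd.snd K2 K2)
  exact ⟨f 0, f 1, f.map_rel (by simp [K2]),
    ev_apply_of_comp_prodWithIdK2_eq_snd hf 0, ev_apply_of_comp_prodWithIdK2_eq_snd hf 1⟩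

end IsExponentialK2

end

/-- The exponential of `K₂` by `K₂` with evaluation does not exist in
**SiLlStGrphs**: there is no simple loopless graph `E` with a strict
homomorphism `ev : E × K₂ → K₂` such that every strict homomorphism
`g : X × K₂ → K₂` factors as `g = ev ∘ (ḡ × id)` for a unique strict
homomorphism `ḡ : X → E`. -/
theorem no_exponentiation_SiLlStGrphs :
    ¬ ∃ (VE : Type) (E : SimpleGraph VE) (ev : catProd E K2 →g K2),
        ∀ (VX : Type) (X : SimpleGraph VX) (g : catProd X K2 →g K2),
          ∃! gb : X →g E, ev.comp (prodWithIdK2 gb) = g := by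
  rintro ⟨VE, E, ev, hexp : IsExponentialK2 E ev⟩
  obtain ⟨e, e', hadj, he, he'⟩ := hexp.exists_adj_ev_eq
  exact E.ne_of_adj hadj (hexp.eq_of_ev_eq he he')
end

section
/- A simple loopless graph A is a generator in SiLlStGrphs if and only if A has at least one vertex and A has no edges (i.e., its adjacency relation is empty). Here A is a generator means: for all simple loopless graphs G, H and all strict homomorphisms f, g : G → H with f ≠ g, there exists a strict homomorphism h : A → G with f ∘ h ≠ g ∘ h. -/
/-- In **SiLlStGrphs**, a simple loopless graph `A` is a generator if and only
if it has at least one vertex and no edges. -/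
theorem generator_iff_SiLlStGrphs {VA : Type} (A : SimpleGraph VA) :
    (∀ (VG VH : Type) (G : SimpleGraph VG) (H : SimpleGraph VH)
        (f g : G →g H), f ≠ g → ∃ h : A →g G, f.comp h ≠ g.comp h)
      ↔ (Nonempty VA ∧ ∀ u v : VA, ¬ A.Adj u v) := by
  constructor
  · intro hgen
    -- use G = H = ⊥ on Bool, f = id, g = not
    obtain ⟨h, hh⟩ := hgen Bool Bool ⊥ ⊥ SimpleGraph.Hom.id
      ⟨fun b => !b, fun h => h.elim⟩
      (by intro h; exact Bool.noConfusion (show true = false from DFunLike.congr_fun h true))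
    constructor
    · by_contra hempty
      apply hh
      ext a
      exact absurd ⟨a⟩ hempty
    · intro u v huv
      exact (h.map_adj huv).elim
  · rintro ⟨⟨a0⟩, hnoedge⟩
    intro VG VH G H f g hfg
    have : ∃ x, f x ≠ g x := by
      by_contra hc
      push_neg at hc
      exact hfg (DFunLike.ext _ _ hc)
    obtain ⟨x, hx⟩ := this
    refine ⟨⟨fun _ => x, fun {a b} hab => absurd hab (hnoedge a b)⟩, fun h => ?_⟩
    exact hx (DFunLike.congr_fun h a0)
end

section
/- No simple loopless graph is a cogenerator in SiLlStGrphs: for every simple loopless graph A there exist simple loopless graphs G, H and strict homomorphisms f, g : G → H with f ≠ g such that every strict homomorphism h : H → A satisfies h ∘ f = h ∘ g. Here A is a cogenerator means: for all simple loopless graphs G, H and all strict homomorphisms f, g : G → H with f ≠ g, there exists a strict homomorphism h : H → A with h ∘ f ≠ h ∘ g. -/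
/-- No simple loopless graph is a cogenerator in **SiLlStGrphs**: for every
simple loopless graph `A` there are strict homomorphisms `f ≠ g : G → H` that
cannot be distinguished by any strict homomorphism `h : H → A`. -/
theorem no_cogenerator_SiLlStGrphs (VA : Type) (A : SimpleGraph VA) :
    ∃ (VG VH : Type) (G : SimpleGraph VG) (H : SimpleGraph VH)
      (f g : G →g H), f ≠ g ∧ ∀ h : H →g A, h.comp f = h.comp g := by
  refine ⟨Unit, Option (Set VA), ⊥, ⊤,
    ⟨fun _ => none, fun h => absurd h (by simp)⟩,
    ⟨fun _ => some ∅, fun h => absurd h (by simp)⟩, ?_, ?_⟩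
  · intro h
    have := congrArg (fun φ => φ.toFun ()) h
    simp at this
  · intro h
    exfalso
    have hinj : Function.Injective h := by
      intro u v huv
      by_contra hne
      have hadj : A.Adj (h u) (h v) := h.map_adj hne
      rw [huv] at hadj
      exact A.irrefl hadj
    have h1 : (Cardinal.mk (Option (Set VA))) ≤ Cardinal.mk VA :=
      Cardinal.mk_le_of_injective hinj
    have h2 : Cardinal.mk VA < Cardinal.mk (Set VA) := by
      simpa [Cardinal.mk_set] using Cardinal.cantor (Cardinal.mk VA)
    have h3 : Cardinal.mk (Set VA) ≤ Cardinal.mk (Option (Set VA)) :=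
      Cardinal.mk_le_of_injective (Option.some_injective _)
    exact absurd (h3.trans h1) (not_le.mpr h2)
end

section
/- A simple loopless graph A is a projective object in SiLlStGrphs if and only if A has no edges (its adjacency relation is empty). Here A is projective means: for all simple loopless graphs G, H, every strict homomorphism p : H → G that is surjective on vertices (an epimorphism), and every strict homomorphism h : A → G, there exists a strict homomorphism h̄ : A → H with p ∘ h̄ = h. -/
/-- In **SiLlStGrphs**, a simple loopless graph `A` is a projective object if
and only if it has no edges. -/
theorem projective_iff_SiLlStGrphs {VA : Type} (A : SimpleGraph VA) :
    (∀ (VG VH : Type) (G : SimpleGraph VG) (H : SimpleGraph VH)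
        (p : H →g G), Function.Surjective p →
        ∀ h : A →g G, ∃ hb : A →g H, p.comp hb = h)
      ↔ (∀ u v : VA, ¬ A.Adj u v) := by
  constructor
  · intro hproj u v huv
    obtain ⟨hb, -⟩ := hproj VA VA ⊤ ⊥ ⟨id, fun h => h.elim⟩ (fun x => ⟨x, rfl⟩)
      ⟨id, fun hadj => A.ne_of_adj hadj⟩
    exact hb.map_adj huv
  · intro hA VG VH G H p hp h
    choose f hf using hp
    refine ⟨⟨fun a => f (h a), fun hadj => (hA _ _ hadj).elim⟩, ?_⟩
    ext a
    exact hf (h a)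
end

section
/- For every nonempty type X, there is no simple loopless graph C together with a function c : V(C) → X such that for every simple loopless graph G and every function g : V(G) → X there exists a unique strict homomorphism ḡ : G → C with c ∘ ḡ = g on vertices. That is, cofree graphs do not exist in SiLlStGrphs (the underlying-vertex-set functor has no right adjoint). -/
/-- Cofree graphs do not exist in **SiLlStGrphs**: for every nonempty type `X`
there is no simple loopless graph `C` with a vertex function `c : V(C) → X`
such that every vertex function `g : V(G) → X` from any simple loopless graph
`G` factors as `g = c ∘ ḡ` for a unique strict homomorphism `ḡ : G → C`. -/
theorem no_cofree_SiLlStGrphs (X : Type) (hX : Nonempty X) :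
    ¬ ∃ (VC : Type) (C : SimpleGraph VC) (c : VC → X),
        ∀ (VG : Type) (G : SimpleGraph VG) (g : VG → X),
          ∃! gb : G →g C, c ∘ ⇑gb = g := by
  rintro ⟨VC, C, c, h⟩
  obtain ⟨x⟩ := hX
  obtain ⟨f, hf, huniq⟩ := h Unit ⊥ (fun _ => x)
  set v := f () with hv
  have key : ∀ w : VC, c w = x → w = v := by
    intro w hw
    have hu := huniq ⟨fun _ => w, fun hab => hab.elim⟩ (by funext u; simpa using hw)
    calc w = (⟨fun _ => w, fun hab => hab.elim⟩ : (⊥ : SimpleGraph Unit) →g C) () := rfl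
    _ = f () := by rw [hu]
  obtain ⟨g2, hg2, -⟩ := h Bool ⊤ (fun _ => x)
  have ht : g2 true = v := key _ (congrFun hg2 true)
  have hfa : g2 false = v := key _ (congrFun hg2 false)
  have hadj : C.Adj (g2 true) (g2 false) := g2.map_rel (by simp)
  rw [ht, hfa] at hadj
  exact C.irrefl hadj
end

section
/- A conceptual morphism f : G → H of simple loopless graphs is an epimorphism (i.e., for every simple loopless graph C and conceptual morphisms h, k : H → C, h ∘ f = k ∘ f implies h = k) if and only if f is surjective on the vertex sets; and f is a monomorphism (i.e., for every simple loopless graph C and conceptual morphisms h, k : C → G, f ∘ h = f ∘ k implies h = k) if and only if f is injective on the vertex sets. -/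
/-- A conceptual morphism of simple loopless graphs: a vertex map taking
adjacent vertices either to equal vertices (collapsing the edge) or to
adjacent vertices. -/
def IsConceptual {V W : Type} (G : SimpleGraph V) (H : SimpleGraph W)
    (f : V → W) : Prop :=
  ∀ ⦃u v : V⦄, G.Adj u v → f u = f v ∨ H.Adj (f u) (f v)

/-- In **SiLlGrphs** (simple loopless graphs with conceptual morphisms), a
conceptual morphism `f : G → H` is an epimorphism iff it is surjective on
vertices and a monomorphism iff it is injective on vertices. -/
theorem epi_mono_SiLlGrphs {V W : Type} (G : SimpleGraph V) (H : SimpleGraph W)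
    (f : V → W) (hf : IsConceptual G H f) :
    ((∀ (U : Type) (C : SimpleGraph U) (h k : W → U),
        IsConceptual H C h → IsConceptual H C k → h ∘ f = k ∘ f → h = k)
      ↔ Function.Surjective f) ∧
    ((∀ (U : Type) (C : SimpleGraph U) (h k : U → V),
        IsConceptual C G h → IsConceptual C G k → f ∘ h = f ∘ k → h = k)
      ↔ Function.Injective f) := by
  constructor
  · constructor
    · intro hepi w
      by_contra hw
      have := hepi Prop ⊤ (fun x => x ∈ Set.range f) (fun _ => True)
        (fun u v _ => by
          by_cases h : (u ∈ Set.range f) = (v ∈ Set.range f)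
          · exact Or.inl h
          · exact Or.inr (by simpa using h))
        (fun u v _ => Or.inl rfl)
        (funext fun v => eq_true ⟨v, rfl⟩)
      exact hw (of_eq_true (congrFun this w))
    · intro hsurj U C h k _ _ heq
      funext w
      obtain ⟨v, rfl⟩ := hsurj w
      exact congrFun heq v
  · constructor
    · intro hmono a b hab
      have := hmono Unit ⊥ (fun _ => a) (fun _ => b)
        (fun u v h => absurd h (by simp)) (fun u v h => absurd h (by simp))
        (funext fun _ => hab)
      exact congrFun this ()
    · intro hinj U C h k _ _ heq
      funext u
      exact hinj (congrFun heq u)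
end

section
/- A simple loopless graph A is a cogenerator in SiLlGrphs if and only if A contains at least one edge (i.e., there exist adjacent vertices in A). Here A is a cogenerator means: for all simple loopless graphs G, H and all conceptual morphisms f, g : G → H with f ≠ g, there exists a conceptual morphism h : H → A with h ∘ f ≠ h ∘ g. -/
/-- In **SiLlGrphs**, a simple loopless graph `A` is a cogenerator if and only
if it contains at least one edge. -/
theorem cogenerator_iff_SiLlGrphs {VA : Type} (A : SimpleGraph VA) :
    (∀ (VG VH : Type) (G : SimpleGraph VG) (H : SimpleGraph VH) (f g : VG → VH),
        IsConceptual G H f → IsConceptual G H g → f ≠ g →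
        ∃ h : VH → VA, IsConceptual H A h ∧ h ∘ f ≠ h ∘ g)
      ↔ ∃ u v : VA, A.Adj u v := by
  constructor
  · intro hc
    have hf : IsConceptual (⊤ : SimpleGraph Bool) (⊤ : SimpleGraph Bool) id := by
      intro u v h; exact Or.inr h
    have hg : IsConceptual (⊤ : SimpleGraph Bool) (⊤ : SimpleGraph Bool) not := by
      intro u v h
      right
      revert h; cases u <;> cases v <;> simp
    have hne : (id : Bool → Bool) ≠ not := by
      intro e
      have := congrFun e true
      simp at this
    obtain ⟨h, hcon, hne2⟩ := hc Bool Bool ⊤ ⊤ id not hf hg hne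
    have : h true ≠ h false := by
      intro e
      apply hne2
      funext x
      cases x <;> simp [e]
    rcases hcon (u := true) (v := false) (by simp) with h1 | h1
    · exact absurd h1 this
    · exact ⟨_, _, h1⟩
  · rintro ⟨a, b, hab⟩ VG VH G H f g hf hg hne
    have : ∃ x, f x ≠ g x := by
      by_contra h
      push_neg at h
      exact hne (funext h)
    obtain ⟨x, hx⟩ := this
    classical
    refine ⟨fun w => if w = f x then a else b, ?_, ?_⟩
    · intro u v _
      by_cases hu : u = f x <;> by_cases hv : v = f x <;> simp [hu, hv]
      · exact Or.inr hab
      · exact Or.inr hab.symm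
    · intro e
      have h2 := congrFun e x
      have hgx : ¬ (g x = f x) := fun h' => hx h'.symm
      simp only [Function.comp_apply, if_pos rfl, if_neg hgx] at h2
      exact (A.ne_of_adj hab) h2
end

section
/- A simple loopless graph Q is an injective object in SiLlGrphs if and only if Q has at least one vertex and Q is complete (every two distinct vertices of Q are adjacent). Here Q is injective means: for all simple loopless graphs G, H, every conceptual morphism i : G → H that is injective on vertices (a monomorphism), and every conceptual morphism f : G → Q, there exists a conceptual morphism f̄ : H → Q with f̄ ∘ i = f. -/
/-- In **SiLlGrphs**, a simple loopless graph `Q` is an injective object if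
and only if it has at least one vertex and is complete (any two distinct
vertices are adjacent). -/
theorem injective_iff_SiLlGrphs {VQ : Type} (Q : SimpleGraph VQ) :
    (∀ (VG VH : Type) (G : SimpleGraph VG) (H : SimpleGraph VH)
        (i : VG → VH) (f : VG → VQ),
        IsConceptual G H i → Function.Injective i → IsConceptual G Q f →
        ∃ fb : VH → VQ, IsConceptual H Q fb ∧ fb ∘ i = f)
      ↔ (Nonempty VQ ∧ ∀ u v : VQ, u ≠ v → Q.Adj u v) := by
  classical
  constructor
  · intro hinj
    constructor
    · obtain ⟨fb, -, -⟩ := hinj Empty Unit ⊥ ⊥ (fun e => e.elim) (fun e => e.elim)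
        (fun u => u.elim) (fun u => u.elim) (fun u => u.elim)
      exact ⟨fb ()⟩
    · intro u v huv
      obtain ⟨fb, hc, he⟩ := hinj Bool Bool ⊥ ⊤ id (fun b => if b then u else v)
        (fun a b h => (SimpleGraph.bot_adj a b).mp h |>.elim)
        (fun a b h => h)
        (fun a b h => (SimpleGraph.bot_adj a b).mp h |>.elim)
      have h1 : fb true = u := congrFun he true
      have h2 : fb false = v := congrFun he false
      have : fb true = fb false ∨ Q.Adj (fb true) (fb false) :=
        hc (by simp : (⊤ : SimpleGraph Bool).Adj true false)
      rw [h1, h2] at this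
      exact this.resolve_left huv
  · rintro ⟨⟨q0⟩, hcomp⟩ VG VH G H i f hi hinj hf
    refine ⟨fun h => if hh : ∃ g, i g = h then f hh.choose else q0, ?_, ?_⟩
    · intro a b _
      by_cases h : (if hh : ∃ g, i g = a then f hh.choose else q0)
          = (if hh : ∃ g, i g = b then f hh.choose else q0)
      · exact Or.inl h
      · exact Or.inr (hcomp _ _ h)
    · funext g
      have hg : ∃ g', i g' = i g := ⟨g, rfl⟩
      simp only [Function.comp_apply, dif_pos hg]
      exact congrArg f (hinj hg.choose_spec)
end

section
/- A simple loopless graph A is a projective object in SiLlGrphs if and only if A has no edges (its adjacency relation is empty). Here A is projective means: for all simple loopless graphs G, H, every conceptual morphism p : H → G that is surjective on vertices (an epimorphism), and every conceptual morphism h : A → G, there exists a conceptual morphism h̄ : A → H with p ∘ h̄ = h. -/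
/-- In **SiLlGrphs**, a simple loopless graph `A` is a projective object if
and only if it has no edges. -/
theorem projective_iff_SiLlGrphs {VA : Type} (A : SimpleGraph VA) :
    (∀ (VG VH : Type) (G : SimpleGraph VG) (H : SimpleGraph VH)
        (p : VH → VG) (h : VA → VG),
        IsConceptual H G p → Function.Surjective p → IsConceptual A G h →
        ∃ hb : VA → VH, IsConceptual A H hb ∧ p ∘ hb = h)
      ↔ ∀ u v : VA, ¬ A.Adj u v := by
  constructor
  · intro proj u v huv
    obtain ⟨hb, hc, hcomp⟩ := proj VA VA A (⊥ : SimpleGraph VA) id id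
      (fun a b hab => absurd hab (by simp)) Function.surjective_id
      (fun a b hab => Or.inr hab)
    have hbid : hb = id := hcomp
    rcases hc huv with heq | hadj
    · exact A.ne_of_adj huv (by simpa [hbid] using heq)
    · simp at hadj
  · intro hA VG VH G H p h _ hsurj _
    refine ⟨Function.surjInv hsurj ∘ h, fun a b hab => absurd hab (hA a b), ?_⟩
    funext x
    simp [Function.surjInv_eq hsurj]
end

section
/- Exponentiation with evaluation exists in SiLlGrphs: for all simple loopless graphs G and H there exist a simple loopless graph E and a conceptual morphism ev : E ⊓ G → H such that for every simple loopless graph X and every conceptual morphism g : X ⊓ G → H there is a unique conceptual morphism ḡ : X → E satisfying ev ∘ (ḡ × id) = g, where ḡ × id : X ⊓ G → E ⊓ G is the conceptual morphism sending (x, u) to (ḡ x, u). -/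
/-- The categorical product `G ⊓ H` in **SiLlGrphs**: distinct pairs `(a,b)`
and `(c,d)` are adjacent iff (`a = c` or `a ~ c` in `G`) and (`b = d` or
`b ~ d` in `H`). -/
def cProd {V W : Type} (G : SimpleGraph V) (H : SimpleGraph W) :
    SimpleGraph (V × W) where
  Adj p q := p ≠ q ∧ (p.1 = q.1 ∨ G.Adj p.1 q.1) ∧ (p.2 = q.2 ∨ H.Adj p.2 q.2)
  symm := ⟨by
    rintro p q ⟨h0, h1, h2⟩
    exact ⟨h0.symm, h1.imp Eq.symm fun a => a.symm, h2.imp Eq.symm fun a => a.symm⟩⟩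
  loopless := ⟨fun p h => h.1 rfl⟩

/-! Conceptual morphisms are exactly the maps preserving reflexive adjacency `EqOrAdj`
(`u = v ∨ u ~ v`), and `EqOrAdj` on `cProd G H` is componentwise. So **SiLlGrphs** behaves like
the category of reflexive graphs, and the usual exponential works: the vertices of `H ^ G` are the
conceptual maps `G → H`, with `EqOrAdj f f'` iff `EqOrAdj u v` implies `EqOrAdj (f u) (f' v)`;
evaluation and currying are then the obvious maps. -/

namespace SimpleGraph

variable {V : Type}

def EqOrAdj (G : SimpleGraph V) (u v : V) : Prop :=
  u = v ∨ G.Adj u v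

theorem EqOrAdj.refl (G : SimpleGraph V) (u : V) : G.EqOrAdj u u :=
  Or.inl rfl

theorem EqOrAdj.symm {G : SimpleGraph V} {u v : V} (h : G.EqOrAdj u v) : G.EqOrAdj v u :=
  h.imp Eq.symm G.adj_symm

end SimpleGraph

open SimpleGraph

variable {V W X : Type} {G : SimpleGraph V} {H : SimpleGraph W}

theorem isConceptual_iff {f : V → W} :
    IsConceptual G H f ↔ ∀ u v, G.EqOrAdj u v → H.EqOrAdj (f u) (f v) := by
  refine ⟨fun hf u v huv => ?_, fun hf u v huv => hf u v (Or.inr huv)⟩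
  rcases huv with rfl | huv
  · exact EqOrAdj.refl H (f u)
  · exact hf huv

theorem eqOrAdj_cProd_iff {p q : V × W} :
    (cProd G H).EqOrAdj p q ↔ G.EqOrAdj p.1 q.1 ∧ H.EqOrAdj p.2 q.2 := by
  by_cases hpq : p = q
  · subst hpq
    exact ⟨fun _ => ⟨EqOrAdj.refl G _, EqOrAdj.refl H _⟩, fun _ => EqOrAdj.refl _ _⟩
  · simp only [EqOrAdj, cProd, hpq, ne_eq, not_false_eq_true, true_and, false_or]

variable (G H) in
def expGraph : SimpleGraph {f : V → W // IsConceptual G H f} where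
  Adj f f' := f ≠ f' ∧ ∀ u v, G.EqOrAdj u v → H.EqOrAdj (f.1 u) (f'.1 v)
  symm := ⟨fun _ _ ⟨hne, h⟩ => ⟨hne.symm, fun u v huv => (h v u huv.symm).symm⟩⟩
  loopless := ⟨fun _ h => h.1 rfl⟩

theorem eqOrAdj_expGraph_iff {f f' : {f : V → W // IsConceptual G H f}} :
    (expGraph G H).EqOrAdj f f' ↔ ∀ u v, G.EqOrAdj u v → H.EqOrAdj (f.1 u) (f'.1 v) := by
  by_cases hff' : f = f'
  · subst hff'
    exact ⟨fun _ => isConceptual_iff.1 f.2, fun _ => EqOrAdj.refl _ _⟩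
  · simp only [EqOrAdj, expGraph, hff', ne_eq, not_false_eq_true, true_and, false_or]

variable (G H) in
def expEval (p : {f : V → W // IsConceptual G H f} × V) : W :=
  p.1.1 p.2

theorem isConceptual_expEval : IsConceptual (cProd (expGraph G H) G) H (expEval G H) :=
  isConceptual_iff.2 fun _ _ hpq =>
    eqOrAdj_expGraph_iff.1 (eqOrAdj_cProd_iff.1 hpq).1 _ _ (eqOrAdj_cProd_iff.1 hpq).2

section Curry

variable {Y : SimpleGraph X} {g : X × V → W}

def expCurry (hg : IsConceptual (cProd Y G) H g) (x : X) : {f : V → W // IsConceptual G H f} :=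
  ⟨fun u => g (x, u), isConceptual_iff.2 fun _ _ huv =>
    isConceptual_iff.1 hg _ _ (eqOrAdj_cProd_iff.2 ⟨EqOrAdj.refl Y x, huv⟩)⟩

theorem isConceptual_expCurry (hg : IsConceptual (cProd Y G) H g) :
    IsConceptual Y (expGraph G H) (expCurry hg) :=
  isConceptual_iff.2 fun _ _ hxy => eqOrAdj_expGraph_iff.2 fun _ _ huv =>
    isConceptual_iff.1 hg _ _ (eqOrAdj_cProd_iff.2 ⟨hxy, huv⟩)

theorem expEval_comp_expCurry (hg : IsConceptual (cProd Y G) H g) :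
    expEval G H ∘ (fun p : X × V => (expCurry hg p.1, p.2)) = g :=
  rfl

theorem eq_expCurry_of_expEval_comp (hg : IsConceptual (cProd Y G) H g)
    {gb : X → {f : V → W // IsConceptual G H f}}
    (hgb : expEval G H ∘ (fun p : X × V => (gb p.1, p.2)) = g) : gb = expCurry hg :=
  funext fun x => Subtype.ext <| funext fun u => congrFun hgb (x, u)

end Curry

/-- Exponentiation with evaluation exists in **SiLlGrphs**: for all simple
loopless graphs `G`, `H` there are a simple loopless graph `E` and a
conceptual morphism `ev : E ⊓ G → H` such that every conceptual morphism
`g : X ⊓ G → H` factors as `g = ev ∘ (ḡ × id)` for a unique conceptual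
morphism `ḡ : X → E`. -/
theorem exponentiation_SiLlGrphs {VG VH : Type} (G : SimpleGraph VG)
    (H : SimpleGraph VH) :
    ∃ (VE : Type) (E : SimpleGraph VE) (ev : VE × VG → VH),
      IsConceptual (cProd E G) H ev ∧
      ∀ (VX : Type) (X : SimpleGraph VX) (g : VX × VG → VH),
        IsConceptual (cProd X G) H g →
        ∃! gb : VX → VE, IsConceptual X E gb ∧
          ev ∘ (fun p : VX × VG => (gb p.1, p.2)) = g :=
  ⟨_, expGraph G H, expEval G H, isConceptual_expEval, fun _ _ _ hg =>
    ⟨expCurry hg, ⟨isConceptual_expCurry hg, expEval_comp_expCurry hg⟩,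
      fun _ hgb => eq_expCurry_of_expEval_comp hg hgb.2⟩⟩
end

section
/- A simple graph with loops (A, r) is a generator in SiStGrphs if and only if A is nonempty and r has no edges at all (for all u, v in A, ¬ r u v, in particular no loops). Here (A, r) is a generator means: for all simple graphs with loops (V, p), (W, q) and all strict morphisms f, g : (V, p) → (W, q) with f ≠ g, there exists a strict morphism h : (A, r) → (V, p) with f ∘ h ≠ g ∘ h. -/
/-- A strict morphism between simple graphs with loops `(V, r)` and `(W, s)`:
a vertex map sending edges (including loops) to edges. -/
def IsStrict {V W : Type} (r : V → V → Prop) (s : W → W → Prop)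
    (f : V → W) : Prop :=
  ∀ ⦃u v : V⦄, r u v → s (f u) (f v)

/-- In **SiStGrphs**, a simple graph with loops `(A, r)` is a generator if and
only if `A` is nonempty and `r` has no edges at all (in particular no
loops). -/
theorem generator_iff_SiStGrphs {A : Type} (r : A → A → Prop)
    (hr : Symmetric r) :
    (∀ (V W : Type) (p : V → V → Prop) (q : W → W → Prop),
        Symmetric p → Symmetric q →
        ∀ f g : V → W, IsStrict p q f → IsStrict p q g → f ≠ g →
          ∃ h : A → V, IsStrict r p h ∧ f ∘ h ≠ g ∘ h)
      ↔ (Nonempty A ∧ ∀ u v : A, ¬ r u v) := by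
  constructor
  · intro hgen
    have key := hgen Bool Bool (fun _ _ => False) (fun _ _ => False)
      (fun _ _ h => h) (fun _ _ h => h) id not
      (fun _ _ h => h.elim) (fun _ _ h => h.elim)
      (by intro h; have := congrFun h true; simp at this)
    obtain ⟨h, hstrict, hne⟩ := key
    constructor
    · by_contra hA
      exact hne (funext fun a => absurd ⟨a⟩ hA)
    · intro u v huv
      exact hstrict huv
  · rintro ⟨⟨a0⟩, hno⟩ V W p q hp hq f g hf hg hfg
    have : ∃ v, f v ≠ g v := by
      by_contra h
      push_neg at h
      exact hfg (funext h)
    obtain ⟨v, hv⟩ := this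
    refine ⟨fun _ => v, fun u w huw => absurd huw (hno u w), ?_⟩
    intro h
    exact hv (congrFun h a0)
end

section
/- A simple graph with loops (A, r) is a cogenerator in SiStGrphs if and only if it contains a subgraph isomorphic to K₂ with a loop at each vertex, i.e., there exist vertices u ≠ v in A with r u u, r v v, and r u v. Here (A, r) is a cogenerator means: for all simple graphs with loops (V, p), (W, q) and all strict morphisms f, g : (V, p) → (W, q) with f ≠ g, there exists a strict morphism h : (W, q) → (A, r) with h ∘ f ≠ h ∘ g. -/
/-- In **SiStGrphs**, a simple graph with loops `(A, r)` is a cogenerator if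
and only if it contains a subgraph isomorphic to `K₂` with a loop at each
vertex: vertices `u ≠ v` with `r u u`, `r v v` and `r u v`. -/
theorem cogenerator_iff_SiStGrphs {A : Type} (r : A → A → Prop)
    (hr : Symmetric r) :
    (∀ (V W : Type) (p : V → V → Prop) (q : W → W → Prop),
        Symmetric p → Symmetric q →
        ∀ f g : V → W, IsStrict p q f → IsStrict p q g → f ≠ g →
          ∃ h : W → A, IsStrict q r h ∧ h ∘ f ≠ h ∘ g)
      ↔ ∃ u v : A, u ≠ v ∧ r u u ∧ r v v ∧ r u v := by
  constructor
  · intro hc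
    obtain ⟨h, hs, hne⟩ := hc Bool Bool (fun _ _ => True) (fun _ _ => True)
      (fun _ _ _ => trivial) (fun _ _ _ => trivial) id not
      (fun _ _ _ => trivial) (fun _ _ _ => trivial)
      (by intro he; simpa using congrFun he true)
    refine ⟨h false, h true, ?_, hs trivial, hs trivial, hs trivial⟩
    intro he
    apply hne
    funext b
    cases b <;> simp [he]
  · rintro ⟨u, v, huv, huu, hvv, he⟩
    intro V W p q hp hq f g hf hg hfg
    classical
    have hx : ∃ x, f x ≠ g x := by
      by_contra h'
      push_neg at h'
      exact hfg (funext h')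
    obtain ⟨x, hx⟩ := hx
    refine ⟨fun w => if w = f x then u else v, ?_, ?_⟩
    · intro a b _
      by_cases ha : a = f x <;> by_cases hb : b = f x <;>
        simp [ha, hb, huu, hvv, he, hr he]
    · intro hcon
      have h2 := congrFun hcon x
      simp only [Function.comp_apply] at h2
      rw [if_pos trivial, if_neg (fun h => hx h.symm)] at h2
      exact huv h2
end

section
/- A simple graph with loops (Q, r) is an injective object in SiStGrphs if and only if Q is nonempty and r is total (r u v holds for all vertices u and v, including u = v), i.e., Q is a complete graph with a loop at every vertex. Here (Q, r) is injective means: for all simple graphs with loops (V, p), (W, q), every strict morphism i : (V, p) → (W, q) that is injective on vertices (a monomorphism), and every strict morphism f : (V, p) → (Q, r), there exists a strict morphism f̄ : (W, q) → (Q, r) with f̄ ∘ i = f. -/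
/-- In **SiStGrphs**, a simple graph with loops `(Q, r)` is an injective
object if and only if `Q` is nonempty and `r` is total, i.e. `Q` is a complete
graph with a loop at every vertex. -/
theorem injective_iff_SiStGrphs {Q : Type} (r : Q → Q → Prop)
    (hr : Symmetric r) :
    (∀ (V W : Type) (p : V → V → Prop) (q : W → W → Prop),
        Symmetric p → Symmetric q →
        ∀ (i : V → W) (f : V → Q),
          IsStrict p q i → Function.Injective i → IsStrict p r f →
          ∃ fb : W → Q, IsStrict q r fb ∧ fb ∘ i = f)
      ↔ (Nonempty Q ∧ ∀ u v : Q, r u v) := by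
  constructor
  · intro h
    constructor
    · obtain ⟨fb, -, -⟩ := h Empty Unit (fun _ _ => False) (fun _ _ => False)
        (fun _ _ h => h.elim) (fun _ _ h => h.elim) (fun x => x.elim)
        (fun x => x.elim) (fun _ _ h => h.elim)
        (fun x => x.elim) (fun _ _ h => h.elim)
      exact ⟨fb ()⟩
    · intro u v
      obtain ⟨fb, hfb, hcomp⟩ := h Bool Bool (fun _ _ => False) (fun _ _ => True)
        (fun _ _ h => h.elim) (fun _ _ _ => trivial) id
        (fun b => if b then u else v)
        (fun _ _ h => h.elim) (fun _ _ h => h) (fun _ _ h => h.elim)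
      have h1 : fb true = u := congrFun hcomp true
      have h2 : fb false = v := congrFun hcomp false
      simpa [h1, h2] using hfb (u := true) (v := false) trivial
  · rintro ⟨⟨q0⟩, htot⟩
    intro V W p q hp hq i f hi hinj hf
    refine ⟨Function.extend i f (fun _ => q0), fun _ _ _ => htot _ _, ?_⟩
    ext v
    simp [Function.Injective.extend_apply hinj]
end

section
/- A simple graph with loops (A, r) is a projective object in SiStGrphs if and only if r has no edges at all (for all u, v in A, ¬ r u v). Here (A, r) is projective means: for all simple graphs with loops (V, p), (W, q), every strict morphism e : (W, q) → (V, p) that is surjective on vertices (an epimorphism), and every strict morphism h : (A, r) → (V, p), there exists a strict morphism h̄ : (A, r) → (W, q) with e ∘ h̄ = h. -/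
/-- In **SiStGrphs**, a simple graph with loops `(A, r)` is a projective
object if and only if `r` has no edges at all. -/
theorem projective_iff_SiStGrphs {A : Type} (r : A → A → Prop)
    (hr : Symmetric r) :
    (∀ (V W : Type) (p : V → V → Prop) (q : W → W → Prop),
        Symmetric p → Symmetric q →
        ∀ (e : W → V) (h : A → V),
          IsStrict q p e → Function.Surjective e → IsStrict r p h →
          ∃ hb : A → W, IsStrict r q hb ∧ e ∘ hb = h)
      ↔ ∀ u v : A, ¬ r u v := by
  constructor
  · intro hproj u v huv
    obtain ⟨hb, hstrict, -⟩ :=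
      hproj Unit Bool (fun _ _ => True) (fun _ _ => False)
        (fun _ _ _ => trivial) (fun _ _ h => h)
        (fun _ => ()) (fun _ => ())
        (fun _ _ _ => trivial) (fun _ => ⟨true, rfl⟩)
        (fun _ _ _ => trivial)
    exact hstrict huv
  · intro hno V W p q hp hq e h he hsurj hh
    refine ⟨fun a => Classical.choose (hsurj (h a)),
      fun u v huv => absurd huv (hno u v), ?_⟩
    funext a
    exact Classical.choose_spec (hsurj (h a))
end
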